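/- (Dvoretzky–Kiefer–Wolfowitz-based moment bound) Let X_1,…,X_n be i.i.d. real random variables with CDF F and empirical CDF F_n. Assuming the DKW inequality P(sup_x |F_n(x) − F(x)| > ε) ≤ 2e^{−2nε²}, for each i the expectation E[|F_n(X_i) − F(X_i)|⁴] ≤ 1/n² (more precisely ≤ 1/n² − (e^{−2n}/n)(2 + 1/n) ≤ 1/n²). -/

import Mathlib

open MeasureTheory Real Set Filter

private lemma stmt5_aux_calc (n : ℕ) (hn : 0 < n) :
    ∫ u in (0:ℝ)..1, 2 * Real.exp (-2 * n * Real.sqrt u) ≤ 1 / (n:ℝ)^2 := by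

  have hn' : (0:ℝ) < n := by exact_mod_cast hn
  have hcg : Continuous (fun u : ℝ => 2 * Real.exp (-2 * n * Real.sqrt u)) := by
    continuity
  have hcov : ∫ x in (0:ℝ)..1, (2*x) • (2 * Real.exp (-2 * n * Real.sqrt (x^2)))
      = ∫ u in (0:ℝ)..1, 2 * Real.exp (-2 * n * Real.sqrt u) := by
    have := intervalIntegral.integral_comp_smul_deriv
      (a := (0:ℝ)) (b := (1:ℝ)) (f := fun x : ℝ => x^2) (f' := fun x : ℝ => 2*x)
      (g := fun u => 2 * Real.exp (-2 * n * Real.sqrt u))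
      (fun x _ => by simpa using (hasDerivAt_pow 2 x))
      ((continuous_const.mul continuous_id).continuousOn) hcg
    simpa using this
  have heq : ∫ x in (0:ℝ)..1, (2*x) • (2 * Real.exp (-2 * n * Real.sqrt (x^2)))
      = ∫ x in (0:ℝ)..1, 4*x * Real.exp (-2 * n * x) := by
    apply intervalIntegral.integral_congr
    intro x hx
    rw [Set.uIcc_of_le (by norm_num : (0:ℝ) ≤ 1)] at hx
    have hx0 : 0 ≤ x := hx.1
    simp only [Real.sqrt_sq hx0, smul_eq_mul]
    ring
  set H : ℝ → ℝ := fun x => Real.exp (-2*n*x) * (-2*x/n - 1/(n:ℝ)^2) with hH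
  have hderiv : ∀ x ∈ Set.uIcc (0:ℝ) 1, HasDerivAt H (4*x * Real.exp (-2*n*x)) x := by
    intro x _
    have h1 : HasDerivAt (fun x : ℝ => Real.exp (-2*n*x)) (Real.exp (-2*n*x) * (-2*n)) x := by
      simpa using ((hasDerivAt_id x).const_mul (-2*(n:ℝ))).exp
    have h2 : HasDerivAt (fun x : ℝ => -2*x/(n:ℝ) - 1/(n:ℝ)^2) ((-2:ℝ)/(n:ℝ)) x := by
      have := (((hasDerivAt_id x).const_mul (-2:ℝ)).div_const (n:ℝ)).sub_const (1/(n:ℝ)^2)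
      exact this.congr_deriv (by ring)
    have := h1.mul h2
    refine this.congr_deriv ?_
    field_simp
    ring
  have hval : ∫ x in (0:ℝ)..1, 4*x * Real.exp (-2 * n * x) = H 1 - H 0 := by
    apply intervalIntegral.integral_eq_sub_of_hasDerivAt hderiv
    apply Continuous.intervalIntegrable
    continuity
  rw [← hcov, heq, hval]
  have h2n : (0:ℝ) < 2/(n:ℝ) := by positivity
  have h1n : (0:ℝ) < 1/(n:ℝ)^2 := by positivity
  have hfac : -2*1/(n:ℝ) - 1/(n:ℝ)^2 ≤ 0 := by
    have : -2*1/(n:ℝ) = -(2/(n:ℝ)) := by ring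
    linarith [this]
  have hneg : Real.exp (-2*(n:ℝ)*1) * (-2*1/(n:ℝ) - 1/(n:ℝ)^2) ≤ 0 :=
    mul_nonpos_of_nonneg_of_nonpos (le_of_lt (Real.exp_pos _)) hfac
  have hH0 : H 0 = -(1/(n:ℝ)^2) := by simp [hH]
  have hH1 : H 1 = Real.exp (-2*(n:ℝ)*1) * (-2*1/(n:ℝ) - 1/(n:ℝ)^2) := rfl
  rw [hH1, hH0]
  linarith


private lemma stmt5_aux_main {Ω : Type*} [MeasurableSpace Ω] (μ : Measure Ω) [IsProbabilityMeasure μ]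
    (n : ℕ) (hn : 0 < n) (X : Fin n → Ω → ℝ) (hX : ∀ i, Measurable (X i))
    (F : ℝ → ℝ) (hF : ∀ i x, F x = (μ {ω | X i ω ≤ x}).toReal)
    (Fn : Ω → ℝ → ℝ)
    (hFn : ∀ ω x, Fn ω x = (1 / (n:ℝ)) * ∑ i, if X i ω ≤ x then (1:ℝ) else 0)
    (hDKW : ∀ ε > (0:ℝ), μ {ω | ∃ x, ε < |Fn ω x - F x|}
        ≤ ENNReal.ofReal (2 * Real.exp (-2 * n * ε^2)))
    (i : Fin n) :
    (∫ ω, |Fn ω (X i ω) - F (X i ω)|^4 ∂μ)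
        ≤ ∫ u in (0:ℝ)..1, 2 * Real.exp (-2 * n * Real.sqrt u) := by
  set g : Ω → ℝ := fun ω => |Fn ω (X i ω) - F (X i ω)|^4 with hg
  have hn' : (0:ℝ) < n := by exact_mod_cast hn
  -- F is monotone, hence measurable
  have hFmono : Monotone F := by
    intro x y hxy
    rw [hF i x, hF i y]
    exact ENNReal.toReal_mono (measure_ne_top μ _)
      (measure_mono fun ω hω => le_trans hω hxy)
  have hFmeas : Measurable F := hFmono.measurable
  -- g is measurable
  have hgmeas : Measurable g := by
    have h1 : Measurable (fun ω => Fn ω (X i ω)) := by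
      have : (fun ω => Fn ω (X i ω))
          = fun ω => (1 / (n:ℝ)) * ∑ j, if X j ω ≤ X i ω then (1:ℝ) else 0 := by
        funext ω; exact hFn ω (X i ω)
      rw [this]
      apply Measurable.const_mul
      apply Finset.measurable_sum
      intro j _
      exact Measurable.ite (measurableSet_le (hX j) (hX i)) measurable_const measurable_const
    exact (((h1.sub (hFmeas.comp (hX i))).abs).pow measurable_const)
  -- bounds on g
  have hFn01 : ∀ ω x, 0 ≤ Fn ω x ∧ Fn ω x ≤ 1 := by
    intro ω x
    rw [hFn ω x]
    constructor
    · apply mul_nonneg (by positivity)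
      apply Finset.sum_nonneg; intro j _; split <;> norm_num
    · rw [one_div, inv_mul_le_iff₀ hn', mul_one]
      calc (∑ j, if X j ω ≤ x then (1:ℝ) else 0) ≤ ∑ _j : Fin n, (1:ℝ) := by
            apply Finset.sum_le_sum; intro j _; split <;> norm_num
        _ = n := by simp
  have hF01 : ∀ x, 0 ≤ F x ∧ F x ≤ 1 := by
    intro x
    rw [hF i x]
    exact ⟨ENNReal.toReal_nonneg, by
      apply ENNReal.toReal_le_of_le_ofReal zero_le_one
      simpa using prob_le_one⟩
  have hg01 : ∀ ω, 0 ≤ g ω ∧ g ω ≤ 1 := by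
    intro ω
    have h1 := hFn01 ω (X i ω)
    have h2 := hF01 (X i ω)
    constructor
    · positivity
    · have habs : |Fn ω (X i ω) - F (X i ω)| ≤ 1 := by
        rw [abs_le]; constructor <;> linarith [h1.1, h1.2, h2.1, h2.2]
      calc g ω = |Fn ω (X i ω) - F (X i ω)|^4 := rfl
        _ ≤ 1^4 := pow_le_pow_left₀ (abs_nonneg _) habs 4
        _ = 1 := by norm_num
  -- integrability
  have hgint : Integrable g μ := by
    apply Integrable.mono' (integrable_const (1:ℝ)) hgmeas.aestronglyMeasurable
    exact Eventually.of_forall fun ω => by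
      rw [Real.norm_eq_abs, abs_of_nonneg (hg01 ω).1]; exact (hg01 ω).2
  -- layer cake
  have hlayer : ∫ ω, g ω ∂μ = ∫ t in Set.Ioi (0:ℝ), ((μ {a | t < g a}).toReal) :=
    hgint.integral_eq_integral_meas_lt (Eventually.of_forall fun ω => (hg01 ω).1)
  -- restrict to Ioc 0 1
  have hrestrict : ∫ t in Set.Ioi (0:ℝ), ((μ {a | t < g a}).toReal)
      = ∫ t in Set.Ioc (0:ℝ) 1, ((μ {a | t < g a}).toReal) := by
    rw [setIntegral_eq_of_subset_of_ae_diff_eq_zero nullMeasurableSet_Ioi Ioc_subset_Ioi_self]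
    apply Eventually.of_forall
    intro t ht
    have ht1 : 1 < t := by
      simp only [mem_diff, mem_Ioi, mem_Ioc, not_and, not_le] at ht
      exact ht.2 ht.1
    have : {a | t < g a} = ∅ := by
      ext a
      simp only [mem_setOf_eq, mem_empty_iff_false, iff_false, not_lt]
      exact le_trans (hg01 a).2 (le_of_lt ht1)
    simp [this]
  -- pointwise bound
  have hpt : ∀ t ∈ Set.Ioc (0:ℝ) 1,
      ((μ {a | t < g a}).toReal) ≤ 2 * Real.exp (-2 * n * Real.sqrt t) := by
    intro t ht
    set ε : ℝ := Real.sqrt (Real.sqrt t) with hε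
    have htpos : 0 < t := ht.1
    have hεpos : 0 < ε := Real.sqrt_pos.mpr (Real.sqrt_pos.mpr htpos)
    have hε2 : ε^2 = Real.sqrt t := Real.sq_sqrt (Real.sqrt_nonneg t)
    have hε4 : ε^4 = t := by
      have : ε^4 = (ε^2)^2 := by ring
      rw [this, hε2, Real.sq_sqrt (le_of_lt htpos)]
    have hsub : {a | t < g a} ⊆ {ω | ∃ x, ε < |Fn ω x - F x|} := by
      intro ω hω
      refine ⟨X i ω, ?_⟩
      have : ε^4 < |Fn ω (X i ω) - F (X i ω)|^4 := by rw [hε4]; exact hω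
      exact lt_of_pow_lt_pow_left₀ 4 (abs_nonneg _) this
    apply ENNReal.toReal_le_of_le_ofReal (by positivity)
    calc μ {a | t < g a} ≤ μ {ω | ∃ x, ε < |Fn ω x - F x|} := measure_mono hsub
      _ ≤ ENNReal.ofReal (2 * Real.exp (-2 * n * ε^2)) := hDKW ε hεpos
      _ = ENNReal.ofReal (2 * Real.exp (-2 * n * Real.sqrt t)) := by rw [hε2]
  -- integrable bounds on Ioc 0 1
  have hmeas_t : Measurable (fun t : ℝ => ((μ {a | t < g a}).toReal)) := by
    apply Measurable.ennreal_toReal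
    exact Antitone.measurable (fun _ _ hst => measure_mono (fun _ h => lt_of_le_of_lt hst h))
  have hint1 : IntegrableOn (fun t : ℝ => ((μ {a | t < g a}).toReal)) (Set.Ioc 0 1) := by
    apply Integrable.mono' (integrable_const (1:ℝ)) hmeas_t.aestronglyMeasurable
    apply Eventually.of_forall
    intro t
    rw [Real.norm_eq_abs, abs_of_nonneg ENNReal.toReal_nonneg]
    exact ENNReal.toReal_le_of_le_ofReal zero_le_one (by simpa using prob_le_one)
  have hint2 : IntegrableOn (fun t : ℝ => 2 * Real.exp (-2 * n * Real.sqrt t)) (Set.Ioc 0 1) := by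
    apply Continuous.integrableOn_Ioc
    continuity
  have hmono : ∫ t in Set.Ioc (0:ℝ) 1, ((μ {a | t < g a}).toReal)
      ≤ ∫ t in Set.Ioc (0:ℝ) 1, 2 * Real.exp (-2 * n * Real.sqrt t) :=
    setIntegral_mono_on hint1 hint2 measurableSet_Ioc hpt
  have hfinal : ∫ t in Set.Ioc (0:ℝ) 1, 2 * Real.exp (-2 * n * Real.sqrt t)
      = ∫ u in (0:ℝ)..1, 2 * Real.exp (-2 * n * Real.sqrt u) := by
    rw [intervalIntegral.integral_of_le (by norm_num : (0:ℝ) ≤ 1)]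
  calc ∫ ω, g ω ∂μ = ∫ t in Set.Ioc (0:ℝ) 1, ((μ {a | t < g a}).toReal) := by
        rw [hlayer, hrestrict]
    _ ≤ ∫ t in Set.Ioc (0:ℝ) 1, 2 * Real.exp (-2 * n * Real.sqrt t) := hmono
    _ = ∫ u in (0:ℝ)..1, 2 * Real.exp (-2 * n * Real.sqrt u) := hfinal

theorem stmt5 {Ω : Type*} [MeasurableSpace Ω] (μ : Measure Ω) [IsProbabilityMeasure μ]
    (n : ℕ) (hn : 0 < n) (X : Fin n → Ω → ℝ) (hX : ∀ i, Measurable (X i))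
    (hindep : ProbabilityTheory.iIndepFun X μ)
    (hident : ∀ i j, μ.map (X i) = μ.map (X j))
    (F : ℝ → ℝ) (hF : ∀ i x, F x = (μ {ω | X i ω ≤ x}).toReal)
    (Fn : Ω → ℝ → ℝ)
    (hFn : ∀ ω x, Fn ω x = (1 / (n:ℝ)) * ∑ i, if X i ω ≤ x then (1:ℝ) else 0)
    (hDKW : ∀ ε > (0:ℝ), μ {ω | ∃ x, ε < |Fn ω x - F x|}
        ≤ ENNReal.ofReal (2 * Real.exp (-2 * n * ε^2)))
    (i : Fin n) :
    (∫ ω, |Fn ω (X i ω) - F (X i ω)|^4 ∂μ)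
        ≤ ∫ u in (0:ℝ)..1, 2 * Real.exp (-2 * n * Real.sqrt u) ∧
      (∫ ω, |Fn ω (X i ω) - F (X i ω)|^4 ∂μ) ≤ 1 / (n:ℝ)^2 := by
  have A := stmt5_aux_main μ n hn X hX F hF Fn hFn hDKW i
  exact ⟨A, A.trans (stmt5_aux_calc n hn)⟩
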